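/- Let f(x) = ∫₀^∞ e^{-ζ/x}/(1+ζ) dζ and f_k(x) = ∑_{n=0}^{k-1} (-1)^n n! x^{n+1}. For every natural number k, f(x) − f_k(x) = O(x^{k+1}) as x → 0⁺; i.e., the divergent series ∑_{n≥0} (-1)^n n! x^{n+1} is the asymptotic expansion of f at 0⁺. -/

import Mathlib

open Real MeasureTheory Set Finset Filter Asymptotics

/-
Expanding `1/(1+ζ)` as a finite geometric sum with remainder,
`1/(1+ζ) = ∑_{n<k} (-ζ)^n + (-ζ)^k/(1+ζ)`, and integrating against `e^{-ζ/x}` gives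
`f = f_k + R_k` with `R_k(x) = ∫₀^∞ (-ζ)^k e^{-ζ/x}/(1+ζ) dζ`, because `∫₀^∞ ζ^n e^{-ζ/x} dζ = Γ(n+1) x^{n+1} = n! x^{n+1}`.
Since `0 < 1/(1+ζ) ≤ 1` on `ζ > 0`, the remainder satisfies
`|R_k(x)| ≤ ∫₀^∞ ζ^k e^{-ζ/x} dζ = k! x^{k+1}`.
-/

lemma integrableOn_pow_mul_exp_neg_div (n : ℕ) {x : ℝ} (hx : 0 < x) :
    IntegrableOn (fun t : ℝ => t ^ n * exp (-t / x)) (Ioi 0) := by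
  refine (integrableOn_rpow_mul_exp_neg_mul_rpow (s := n) (p := 1) (b := 1 / x)
    (by linarith [n.cast_nonneg (α := ℝ)]) one_pos (by positivity)).congr_fun
    (fun t _ => ?_) measurableSet_Ioi
  simp only [rpow_one, rpow_natCast]
  ring_nf

lemma integral_pow_mul_exp_neg_div (n : ℕ) {x : ℝ} (hx : 0 < x) :
    ∫ t in Ioi (0 : ℝ), t ^ n * exp (-t / x) = n.factorial * x ^ (n + 1) := by
  have hGamma := integral_rpow_mul_exp_neg_mul_Ioi (a := n + 1) (r := 1 / x)
    (by positivity) (by positivity)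
  rw [Gamma_nat_eq_factorial, one_div_one_div, add_sub_cancel_right,
    ← Nat.cast_succ, rpow_natCast] at hGamma
  rw [mul_comm, ← hGamma]
  refine setIntegral_congr_fun measurableSet_Ioi fun t _ => ?_
  rw [rpow_natCast]
  ring_nf

lemma one_div_one_add_eq_geom_sum_add {K : Type*} [Field K] {t : K} (ht : 1 + t ≠ 0) (k : ℕ) :
    1 / (1 + t) = ∑ n ∈ range k, (-t) ^ n + (-t) ^ k / (1 + t) := by
  field_simp
  linear_combination geom_sum_mul (-t) k

lemma norm_pow_mul_exp_neg_div_div_one_add_le {t : ℝ} (ht : 0 < t) (k : ℕ) (x : ℝ) :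
    ‖(-t) ^ k * exp (-t / x) / (1 + t)‖ ≤ t ^ k * exp (-t / x) := by
  rw [norm_div, norm_mul, norm_pow, norm_neg, norm_of_nonneg ht.le, norm_of_nonneg (exp_pos _).le,
    norm_of_nonneg (by linarith)]
  exact div_le_self (by positivity) (by linarith)

lemma integrableOn_pow_mul_exp_neg_div_div_one_add (k : ℕ) {x : ℝ} (hx : 0 < x) :
    IntegrableOn (fun t : ℝ => (-t) ^ k * exp (-t / x) / (1 + t)) (Ioi 0) := by
  refine (integrableOn_pow_mul_exp_neg_div k hx).mono' (by fun_prop : Measurable _).aestronglyMeasurable ?_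
  filter_upwards [ae_restrict_mem measurableSet_Ioi] with t ht
  exact norm_pow_mul_exp_neg_div_div_one_add_le ht k x

lemma norm_integral_pow_mul_exp_neg_div_div_one_add_le (k : ℕ) {x : ℝ} (hx : 0 < x) :
    ‖∫ t in Ioi (0 : ℝ), (-t) ^ k * exp (-t / x) / (1 + t)‖ ≤ k.factorial * x ^ (k + 1) := by
  rw [← integral_pow_mul_exp_neg_div k hx]
  refine norm_integral_le_of_norm_le (integrableOn_pow_mul_exp_neg_div k hx) ?_
  filter_upwards [ae_restrict_mem measurableSet_Ioi] with t ht
  exact norm_pow_mul_exp_neg_div_div_one_add_le ht k x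

lemma integral_exp_neg_div_div_one_add_eq (k : ℕ) {x : ℝ} (hx : 0 < x) :
    ∫ t in Ioi (0 : ℝ), exp (-t / x) / (1 + t) =
      ∑ n ∈ range k, (-1) ^ n * n.factorial * x ^ (n + 1) +
        ∫ t in Ioi (0 : ℝ), (-t) ^ k * exp (-t / x) / (1 + t) := by
  have hterm (n : ℕ) : IntegrableOn (fun t : ℝ => (-1) ^ n * (t ^ n * exp (-t / x))) (Ioi 0) :=
    (integrableOn_pow_mul_exp_neg_div n hx).const_mul _
  have hexpand : ∀ t ∈ Ioi (0 : ℝ), exp (-t / x) / (1 + t) =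
      ∑ n ∈ range k, (-1) ^ n * (t ^ n * exp (-t / x)) + (-t) ^ k * exp (-t / x) / (1 + t) := by
    intro t (ht : 0 < t)
    rw [div_eq_mul_one_div, one_div_one_add_eq_geom_sum_add (by positivity) k, mul_add,
      mul_sum]
    congr 1
    · exact sum_congr rfl fun n _ => by rw [neg_pow]; ring
    · ring
  rw [setIntegral_congr_fun measurableSet_Ioi hexpand,
    integral_add (integrable_finsetSum _ fun n _ => hterm n)
      (integrableOn_pow_mul_exp_neg_div_div_one_add k hx),
    integral_finsetSum _ fun n _ => hterm n]
  congr 1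
  refine sum_congr rfl fun n _ => ?_
  rw [integral_const_mul, integral_pow_mul_exp_neg_div n hx, mul_assoc]

/-- For `f(x) = ∫₀^∞ e^{-ζ/x}/(1+ζ) dζ` and `f_k(x) = ∑_{n=0}^{k-1} (-1)^n n! x^{n+1}`,
for every natural number `k`, `f(x) − f_k(x) = O(x^{k+1})` as `x → 0⁺`. -/
theorem euler_asymptotic_expansion
    (f : ℝ → ℝ) (hf : ∀ x, f x = ∫ ζ in Ioi (0 : ℝ), Real.exp (-ζ / x) / (1 + ζ))
    (fk : ℕ → ℝ → ℝ)
    (hfk : ∀ k x, fk k x = ∑ n ∈ Finset.range k,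
      (-1 : ℝ) ^ n * (Nat.factorial n : ℝ) * x ^ (n + 1))
    (k : ℕ) :
    (fun x => f x - fk k x) =O[nhdsWithin 0 (Ioi 0)] fun x => x ^ (k + 1) := by
  refine isBigO_iff.mpr ⟨k.factorial, ?_⟩
  filter_upwards [self_mem_nhdsWithin] with x (hx : 0 < x)
  rw [hf, hfk, integral_exp_neg_div_div_one_add_eq k hx, add_sub_cancel_left,
    norm_of_nonneg (pow_pos hx _).le]
  exact norm_integral_pow_mul_exp_neg_div_div_one_add_le k hx
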